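/- arXiv:math/0104233 — 7 statements merged into one kernel-verified Lean document; each statement's English description precedes it below -/
import Mathlib

section
/- Let S : V → V be a symmetric endomorphism of a real inner product space V of dimension 4 equipped with an orthogonal complex structure J (i.e. J² = -Id, ⟨Jx, Jy⟩ = ⟨x, y⟩), and suppose S anticommutes with J (S∘J = -J∘S). If for all X, Y ∈ V the identity S(Y) ∧ JX♭ - JS(Y) ∧ X♭ - S(X) ∧ JY♭ + JS(X) ∧ Y♭ = 0 holds in Λ²V*, then S = 0. -/
open RealInnerProductSpace

/-- If `S` is a symmetric endomorphism of a 4-dimensional real inner product space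
with orthogonal complex structure `J`, anticommuting with `J`, and the 2-form
identity `S(Y)∧JX♭ - JS(Y)∧X♭ - S(X)∧JY♭ + JS(X)∧Y♭ = 0` holds for all `X, Y`,
then `S = 0`. -/
theorem stmt2 {V : Type*} [NormedAddCommGroup V] [InnerProductSpace ℝ V]
    [FiniteDimensional ℝ V] (hdim : Module.finrank ℝ V = 4)
    (J S : V →ₗ[ℝ] V)
    (hJ2 : ∀ x, J (J x) = -x)
    (hJO : ∀ x y, ⟪J x, J y⟫ = ⟪x, y⟫)
    (hSsym : ∀ x y, ⟪S x, y⟫ = ⟪x, S y⟫)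
    (hSJ : ∀ x, S (J x) = -(J (S x)))
    (hid : ∀ X Y u v : V,
      (⟪S Y, u⟫ * ⟪J X, v⟫ - ⟪S Y, v⟫ * ⟪J X, u⟫)
      - (⟪J (S Y), u⟫ * ⟪X, v⟫ - ⟪J (S Y), v⟫ * ⟪X, u⟫)
      - (⟪S X, u⟫ * ⟪J Y, v⟫ - ⟪S X, v⟫ * ⟪J Y, u⟫)
      + (⟪J (S X), u⟫ * ⟪Y, v⟫ - ⟪J (S X), v⟫ * ⟪Y, u⟫) = 0) :
    S = 0 := by
  -- J is skew-adjoint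
  have skew : ∀ x y : V, ⟪J x, y⟫ = -⟪x, J y⟫ := by
    intro x y
    have h := hJO x (J y)
    rw [hJ2 y, inner_neg_right] at h
    linarith
  have jxx : ∀ x : V, ⟪x, J x⟫ = 0 := by
    intro x
    have h := skew x x
    have h2 : ⟪J x, x⟫ = ⟪x, J x⟫ := real_inner_comm _ _
    linarith
  -- key scalar identity obtained by contracting the 2-form identity with (X, JX)
  have key : ∀ X Y : V, ⟪S X, Y⟫ * ⟪X, X⟫
      = ⟪S X, X⟫ * ⟪X, Y⟫ + ⟪S X, J X⟫ * ⟪Y, J X⟫ := by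
    intro X Y
    have h := hid X Y X (J X)
    simp only [skew, hJ2, inner_neg_right, neg_neg, jxx] at h
    have e1 : ⟪S X, Y⟫ = ⟪S Y, X⟫ := by
      rw [hSsym X Y, real_inner_comm]
    have e2 : ⟪X, Y⟫ = ⟪Y, X⟫ := real_inner_comm _ _
    rw [e1, e2]
    linarith
  -- companion pairs give equal quadratic forms
  have pair : ∀ x y : V, ⟪x, x⟫ = 1 → ⟪y, y⟫ = 1 → ⟪x, y⟫ = 0 → ⟪x, J y⟫ = 0 →
      ⟪S x, x⟫ = ⟪S y, y⟫ ∧ ⟪S x, J x⟫ = ⟪S y, J y⟫ := by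
    intro x y hx hy hxy hxJy
    have hyx : ⟪y, x⟫ = 0 := by rw [real_inner_comm]; exact hxy
    have hyJx : ⟪y, J x⟫ = 0 := by
      have := skew x y
      have h2 : ⟪y, J x⟫ = ⟪J x, y⟫ := real_inner_comm _ _
      linarith
    have hJyJx : ⟪J y, J x⟫ = 0 := by rw [hJO]; exact hyx
    have hJxJy : ⟪J x, J y⟫ = 0 := by rw [hJO]; exact hxy
    have hSyx : ⟪S y, x⟫ = 0 := by
      have h := key y x
      rw [hy, hyx, hxJy] at h; linarith
    have hSxy : ⟪S x, y⟫ = 0 := by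
      have h := key x y
      rw [hx, hxy, hyJx] at h; linarith
    have hSxJy : ⟪S x, J y⟫ = 0 := by
      have h := key x (J y)
      rw [hx, hxJy, hJyJx] at h; linarith
    have hSyJx : ⟪S y, J x⟫ = 0 := by
      have h := key y (J x)
      rw [hy, hyJx, hJxJy] at h; linarith
    have h1 := key (x + y) x
    have h2 := key (x + y) (J x)
    simp only [map_add, inner_add_left, inner_add_right, hx, hy, hxy, hyx,
      hSyx, hSxy, hSxJy, hSyJx, jxx, hxJy, hyJx, hJxJy, hJO x x] at h1 h2
    exact ⟨by linarith, by linarith⟩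
  -- every unit vector has a companion (dimension 4 > 2)
  have exC : ∀ x : V, ∃ y : V, ⟪y, y⟫ = 1 ∧ ⟪x, y⟫ = 0 ∧ ⟪J x, y⟫ = 0 := by
    intro x
    set K : Submodule ℝ V := Submodule.span ℝ ({x, J x} : Set V) with hK
    have hfin : Module.finrank ℝ K ≤ 2 := by
      classical
      have := finrank_span_le_card (R := ℝ) ({x, J x} : Set V)
      refine this.trans ?_
      simp [Set.toFinset_insert]
      exact Finset.card_insert_le _ _
    have horth : Module.finrank ℝ Kᗮ ≠ 0 := by
      have hsum := K.finrank_add_finrank_orthogonal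
      rw [hdim] at hsum
      omega
    have hne : Kᗮ ≠ ⊥ := by
      intro hbot
      rw [hbot] at horth
      simp at horth
    obtain ⟨y, hyK, hy0⟩ := Submodule.exists_mem_ne_zero_of_ne_bot hne
    have hxy : ⟪x, y⟫ = 0 := by
      refine (Submodule.mem_orthogonal K y).mp hyK x ?_
      exact Submodule.subset_span (by simp)
    have hJxy : ⟪J x, y⟫ = 0 := by
      refine (Submodule.mem_orthogonal K y).mp hyK (J x) ?_
      exact Submodule.subset_span (by simp)
    refine ⟨(‖y‖ : ℝ)⁻¹ • y, ?_, ?_, ?_⟩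
    · rw [real_inner_smul_left, real_inner_smul_right, real_inner_self_eq_norm_sq]
      have : ‖y‖ ≠ 0 := norm_ne_zero_iff.mpr hy0
      field_simp
    · rw [real_inner_smul_right, hxy, mul_zero]
    · rw [real_inner_smul_right, hJxy, mul_zero]
  -- quadratic forms vanish on unit vectors
  have bz : ∀ x : V, ⟪x, x⟫ = 1 → ⟪S x, x⟫ = 0 ∧ ⟪S x, J x⟫ = 0 := by
    intro x hx
    obtain ⟨y, hy1, hxy, hJxy⟩ := exC x
    have hxJy : ⟪x, J y⟫ = 0 := by
      have := skew x y
      have h2 : ⟪J x, y⟫ = 0 := hJxy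
      linarith [skew x y, hJxy]
    have hJx1 : ⟪J x, J x⟫ = 1 := by rw [hJO]; exact hx
    have hJxJy : ⟪J x, J y⟫ = 0 := by rw [hJO]; exact hxy
    have p1 := pair x y hx hy1 hxy hxJy
    have p2 := pair (J x) y hJx1 hy1 hJxy hJxJy
    have hb : ⟪S (J x), J x⟫ = -⟪S x, x⟫ := by
      rw [hSJ x, inner_neg_left, hJO]
    have hc : ⟪S (J x), J (J x)⟫ = -⟪S x, J x⟫ := by
      rw [hJ2, hSJ x, inner_neg_left, inner_neg_right, neg_neg, skew]
    constructor
    · have := p1.1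
      have := p2.1
      linarith [p1.1, p2.1]
    · linarith [p1.2, p2.2]
  -- conclude S = 0
  have hS0 : ∀ x : V, S x = 0 := by
    intro x
    rcases eq_or_ne x 0 with h | h
    · simp [h]
    · have hnx : ‖x‖ ≠ 0 := norm_ne_zero_iff.mpr h
      set z : V := (‖x‖ : ℝ)⁻¹ • x with hz
      have hz1 : ⟪z, z⟫ = 1 := by
        rw [hz, real_inner_smul_left, real_inner_smul_right, real_inner_self_eq_norm_sq]
        field_simp
      obtain ⟨hb, hc⟩ := bz z hz1
      have hSz : S z = 0 := by
        have hk := key z (S z)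
        rw [hz1, hb, hc, mul_one, zero_mul, zero_mul, add_zero] at hk
        exact inner_self_eq_zero.mp hk
      have : S x = (‖x‖ : ℝ) • S z := by
        rw [hz, map_smul, smul_smul, mul_inv_cancel₀ hnx, one_smul]
      rw [this, hSz, smul_zero]
  exact LinearMap.ext fun x => (hS0 x).trans rfl
end

section
/- Let φ₀ be an anti-selfdual 2-form on a Kähler surface satisfying ∇_X φ₀ = -β(X)ω + β ∧ JX♭ - Jβ ∧ X♭ for a 1-form β and all vector fields X, where ω is the Kähler form. Then dφ₀ = -3β ∧ ω. Consequently, the 2-form φ = φ₀ + (3/2)σ·ω is closed if and only if β = (1/2)dσ. -/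
open RealInnerProductSpace

variable {V : Type*} [NormedAddCommGroup V] [InnerProductSpace ℝ V]

/-- The Kähler form `ω(x,y) = ⟪Jx, y⟫`. -/
def omJ (J : V →ₗ[ℝ] V) (x y : V) : ℝ := ⟪J x, y⟫

/-- The value `(∇_X φ₀)(Y,Z)` prescribed by the twistor-type equation
`∇_X φ₀ = -β(X)ω + β ∧ JX♭ - Jβ ∧ X♭`, where `(Jβ)(v) = -β(Jv)`. -/
def nabPhi (J : V →ₗ[ℝ] V) (β : V →ₗ[ℝ] ℝ) (X Y Z : V) : ℝ :=
  -(β X) * omJ J Y Z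
    + ((β Y) * omJ J X Z - (β Z) * omJ J X Y)
    - ((-(β (J Y))) * ⟪X, Z⟫ - (-(β (J Z))) * ⟪X, Y⟫)

/-- The exterior derivative `dφ₀(X,Y,Z)`, as the alternation of `∇φ₀` (the
connection being torsion-free). -/
def dPhi (J : V →ₗ[ℝ] V) (β : V →ₗ[ℝ] ℝ) (X Y Z : V) : ℝ :=
  nabPhi J β X Y Z - nabPhi J β Y X Z + nabPhi J β Z X Y

/-- The 3-form `γ ∧ ω` for a 1-form `γ`. -/
def wedgeOm (J : V →ₗ[ℝ] V) (γ : V →ₗ[ℝ] ℝ) (X Y Z : V) : ℝ :=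
  γ X * omJ J Y Z - γ Y * omJ J X Z + γ Z * omJ J X Y

lemma omJ_antisymm (J : V →ₗ[ℝ] V) (hJ2 : ∀ x, J (J x) = -x)
    (hJO : ∀ x y, ⟪J x, J y⟫ = ⟪x, y⟫) (a b : V) :
    omJ J a b = -omJ J b a := by
  have h := hJO a (J b)
  rw [hJ2] at h
  simp only [inner_neg_right] at h
  unfold omJ
  have h2 := real_inner_comm (J b) a
  linarith

/-- linearity of `wedgeOm` in `γ`. -/
lemma wedgeOm_sub (J : V →ₗ[ℝ] V) (γ₁ γ₂ : V →ₗ[ℝ] ℝ) (X Y Z : V) :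
    wedgeOm J (γ₁ - γ₂) X Y Z = wedgeOm J γ₁ X Y Z - wedgeOm J γ₂ X Y Z := by
  simp [wedgeOm]; ring

lemma wedge_eq_zero (hdim : Module.finrank ℝ V = 4)
    (J : V →ₗ[ℝ] V)
    (hJ2 : ∀ x, J (J x) = -x)
    (hJO : ∀ x y, ⟪J x, J y⟫ = ⟪x, y⟫)
    (γ : V →ₗ[ℝ] ℝ) (h : ∀ X Y Z : V, wedgeOm J γ X Y Z = 0) : γ = 0 := by
  have : FiniteDimensional ℝ V := Module.finite_of_finrank_pos (by rw [hdim]; norm_num)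
  ext v
  set K : Submodule ℝ V := Submodule.span ℝ {v, J v} with hK
  classical
  have hcard : Module.finrank ℝ K ≤ 2 := by
    refine le_trans (finrank_span_le_card ({v, J v} : Set V)) ?_
    rw [Set.toFinset_insert, Set.toFinset_singleton]
    simpa using Finset.card_insert_le v {J v}
  have hpos : 0 < Module.finrank ℝ Kᗮ := by
    have := Submodule.finrank_add_finrank_orthogonal K
    rw [hdim] at this
    omega
  haveI := Module.nontrivial_of_finrank_pos hpos
  obtain ⟨⟨w, hwK⟩, hw0⟩ := exists_ne (0 : Kᗮ)
  have hw : w ≠ 0 := by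
    · intro hw; apply hw0; ext; exact hw
  have hvw : ⟪v, w⟫ = 0 :=
    hwK v (Submodule.subset_span (by simp))
  have hJvw : ⟪J v, w⟫ = 0 :=
    hwK (J v) (Submodule.subset_span (by simp))
  have key := h v w (J w)
  unfold wedgeOm omJ at key
  rw [hJO, hJO, hvw, hJvw] at key
  have hww : ⟪w, w⟫ ≠ 0 := by
    exact fun hc => hw ((inner_self_eq_zero (𝕜 := ℝ)).mp hc)
  have : γ v * ⟪w, w⟫ = 0 := by linarith
  simpa [LinearMap.zero_apply] using (mul_eq_zero.mp this).resolve_right hww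

/-- If an anti-selfdual 2-form `φ₀` on a Kähler surface satisfies
`∇_X φ₀ = -β(X)ω + β ∧ JX♭ - Jβ ∧ X♭`, then `dφ₀ = -3β∧ω`; consequently
`φ = φ₀ + (3/2)σω` is closed (`dφ₀ + (3/2)dσ∧ω = 0`) iff `β = (1/2)dσ`. -/
theorem stmt4 (hdim : Module.finrank ℝ V = 4)
    (J : V →ₗ[ℝ] V)
    (hJ2 : ∀ x, J (J x) = -x)
    (hJO : ∀ x y, ⟪J x, J y⟫ = ⟪x, y⟫)
    (β dσ : V →ₗ[ℝ] ℝ) :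
    (∀ X Y Z : V, dPhi J β X Y Z = -3 * wedgeOm J β X Y Z) ∧
    ((∀ X Y Z : V, dPhi J β X Y Z + (3 / 2) * wedgeOm J dσ X Y Z = 0) ↔
      β = (1 / 2 : ℝ) • dσ) := by
  have h1 : ∀ X Y Z : V, dPhi J β X Y Z = -3 * wedgeOm J β X Y Z := by
    intro X Y Z
    simp only [dPhi, nabPhi, wedgeOm]
    rw [omJ_antisymm J hJ2 hJO Y X, omJ_antisymm J hJ2 hJO Z X,
      omJ_antisymm J hJ2 hJO Z Y, real_inner_comm Y X, real_inner_comm Z X,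
      real_inner_comm Z Y]
    ring
  refine ⟨h1, ?_, ?_⟩
  · intro h
    have hz : ∀ X Y Z : V, wedgeOm J (β - (1 / 2 : ℝ) • dσ) X Y Z = 0 := by
      intro X Y Z
      have h2 : wedgeOm J ((1 / 2 : ℝ) • dσ) X Y Z = (1 / 2) * wedgeOm J dσ X Y Z := by
        simp [wedgeOm]; ring
      have h3 := h X Y Z
      rw [h1 X Y Z] at h3
      rw [wedgeOm_sub, h2]
      linarith
    exact sub_eq_zero.mp (wedge_eq_zero hdim J hJ2 hJO _ hz)
  · intro h X Y Z
    rw [h1 X Y Z, h]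
    simp only [wedgeOm, LinearMap.smul_apply, smul_eq_mul]
    ring
end

section
/- Let σ, λ be smooth functions and set ξ = σ/2 + λ, η = σ/2 - λ. Suppose φ₀ is a J-invariant trace-free 2-form with |φ₀| = √2·λ satisfying φ₀(J dσ) = -2λ dλ (as 1-forms, via the metric) and (φ₀∘J)² = λ²·Id. Then dξ and dη are eigenforms of the symmetric endomorphism -φ₀∘J with eigenvalues λ and -λ respectively; in particular, wherever λ ≠ 0, the 1-forms dξ and dη are orthogonal. -/
open RealInnerProductSpace

/-- Eigenform computation for a hamiltonian 2-form: if `φ₀` is a skew,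
`J`-commuting endomorphism (the trace-free `J`-invariant 2-form) with
`φ₀(J dσ) = -2λ dλ` and `(φ₀∘J)² = λ²·Id`, then `dξ = dσ/2 + dλ` and
`dη = dσ/2 - dλ` are eigenvectors of `-φ₀∘J` with eigenvalues `λ` and `-λ`;
in particular they are orthogonal wherever `λ ≠ 0`.  Here `u, v` denote the
metric duals of `dσ, dλ`. -/
theorem stmt5 {V : Type*} [NormedAddCommGroup V] [InnerProductSpace ℝ V]
    (J φ₀ : V →ₗ[ℝ] V)
    (hJ2 : ∀ x, J (J x) = -x)
    (hJO : ∀ x y, ⟪J x, J y⟫ = ⟪x, y⟫)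
    (hskew : ∀ x y, ⟪φ₀ x, y⟫ = -⟪x, φ₀ y⟫)
    (hJcomm : ∀ x, φ₀ (J x) = J (φ₀ x))
    (lam : ℝ) (u v : V)
    (h1 : φ₀ (J u) = (-2 * lam) • v)
    (h2 : ∀ x, φ₀ (J (φ₀ (J x))) = lam ^ 2 • x) :
    -(φ₀ (J ((1 / 2 : ℝ) • u + v))) = lam • ((1 / 2 : ℝ) • u + v) ∧
    -(φ₀ (J ((1 / 2 : ℝ) • u - v))) = (-lam) • ((1 / 2 : ℝ) • u - v) ∧
    (lam ≠ 0 → ⟪(1 / 2 : ℝ) • u + v, (1 / 2 : ℝ) • u - v⟫ = 0) := by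
  -- A = φ₀ ∘ J is symmetric
  have hsym : ∀ x y : V, ⟪φ₀ (J x), y⟫ = ⟪x, φ₀ (J y)⟫ := by
    intro x y
    calc ⟪φ₀ (J x), y⟫ = -⟪J x, φ₀ y⟫ := hskew _ _
      _ = -⟪J (J x), J (φ₀ y)⟫ := by rw [hJO]
      _ = -⟪-x, φ₀ (J y)⟫ := by rw [hJ2, hJcomm]
      _ = ⟪x, φ₀ (J y)⟫ := by rw [inner_neg_left]; ring
  -- key: φ₀ (J v) = -(lam/2) • u
  have hAv : φ₀ (J v) = (-(lam / 2)) • u := by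
    rcases eq_or_ne lam 0 with h0 | h0
    · subst h0
      have hnorm : ⟪φ₀ (J v), φ₀ (J v)⟫ = (0 : ℝ) := by
        rw [hsym, h2]; simp
      have : φ₀ (J v) = 0 := inner_self_eq_zero.mp hnorm
      simp [this]
    · have hu := h2 u
      rw [h1, map_smul, map_smul] at hu
      have : (-2 * lam) • φ₀ (J v) = lam ^ 2 • u := hu
      have h3 : φ₀ (J v) = ((-2 * lam)⁻¹ * lam ^ 2) • u := by
        rw [← smul_smul]
        rw [← this, smul_smul, inv_mul_cancel₀ (by simpa using (mul_ne_zero two_ne_zero h0)), one_smul]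
      rw [h3]
      congr 1
      field_simp
  have eq1 : -(φ₀ (J ((1 / 2 : ℝ) • u + v))) = lam • ((1 / 2 : ℝ) • u + v) := by
    rw [map_add, map_add, map_smul, map_smul, h1, hAv]
    module
  have eq2 : -(φ₀ (J ((1 / 2 : ℝ) • u - v))) = (-lam) • ((1 / 2 : ℝ) • u - v) := by
    rw [map_sub, map_sub, map_smul, map_smul, h1, hAv]
    module
  refine ⟨eq1, eq2, fun hl => ?_⟩
  set a := (1 / 2 : ℝ) • u + v
  set b := (1 / 2 : ℝ) • u - v
  have key : lam * ⟪a, b⟫ = -(lam * ⟪a, b⟫) := by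
    calc lam * ⟪a, b⟫ = ⟪lam • a, b⟫ := (real_inner_smul_left _ _ _).symm
      _ = ⟪-(φ₀ (J a)), b⟫ := by rw [eq1]
      _ = -⟪φ₀ (J a), b⟫ := by rw [inner_neg_left]
      _ = -⟪a, φ₀ (J b)⟫ := by rw [hsym]
      _ = ⟪a, -(φ₀ (J b))⟫ := by rw [inner_neg_right]
      _ = ⟪a, (-lam) • b⟫ := by rw [eq2]
      _ = -(lam * ⟪a, b⟫) := by rw [real_inner_smul_right]; ring
  have : 2 * (lam * ⟪a, b⟫) = 0 := by linarith
  have := mul_eq_zero.mp (by linarith : lam * ⟪a, b⟫ = 0)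
  tauto
end

section
/- Consider the metric g = (ξ-η)(dξ²/F(ξ) - dη²/G(η)) + (ξ-η)⁻¹(F(ξ)(dt + η dz)² - G(η)(dt + ξ dz)²) with Kähler form ω = dξ∧(dt + η dz) + dη∧(dt + ξ dz), defined on an open set where ξ > η, F(ξ) > 0, G(η) < 0. Then ω is closed, ∂/∂t and ∂/∂z are Killing vector fields of g, and they are hamiltonian with respect to ω with momentum maps ξ + η and ξη respectively. -/
noncomputable section

/-- Coordinates `(ξ, η, t, z)` on ℝ⁴. -/
abbrev V4 := Fin 4 → ℝ

/-- The ortho-toric metric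
`g = (ξ-η)(dξ²/F(ξ) - dη²/G(η)) + (ξ-η)⁻¹(F(ξ)(dt+η dz)² - G(η)(dt+ξ dz)²)`. -/
def gOT (F G : ℝ → ℝ) (p v w : V4) : ℝ :=
  (p 0 - p 1) / F (p 0) * (v 0 * w 0)
    - (p 0 - p 1) / G (p 1) * (v 1 * w 1)
    + F (p 0) / (p 0 - p 1) * ((v 2 + p 1 * v 3) * (w 2 + p 1 * w 3))
    - G (p 1) / (p 0 - p 1) * ((v 2 + p 0 * v 3) * (w 2 + p 0 * w 3))

/-- The ortho-toric Kähler form `ω = dξ∧(dt+η dz) + dη∧(dt+ξ dz)`. -/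
def ωOT (p v w : V4) : ℝ :=
  (v 0 * (w 2 + p 1 * w 3) - w 0 * (v 2 + p 1 * v 3))
    + (v 1 * (w 2 + p 0 * w 3) - w 1 * (v 2 + p 0 * v 3))

/-- Projection onto the `i`-th coordinate as a continuous linear map. -/
def prOT (i : Fin 4) : V4 →L[ℝ] ℝ := ContinuousLinearMap.proj i

lemma hprOT (i : Fin 4) (p : V4) : HasFDerivAt (fun q : V4 => q i) (prOT i) p :=
  (prOT i).hasFDerivAt

lemma haffOT (A B C : ℝ) (p : V4) :
    HasFDerivAt (fun q : V4 => A * q 0 + B * q 1 + C) (A • prOT 0 + B • prOT 1) p :=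
  (((hprOT 0 p).const_mul A).add ((hprOT 1 p).const_mul B)).add_const C

lemma fderiv_ωOT (p v w u : V4) :
    fderiv ℝ (fun q => ωOT q v w) p u
      = (v 1 * w 3 - w 1 * v 3) * u 0 + (v 0 * w 3 - w 0 * v 3) * u 1 := by
  have h : (fun q : V4 => ωOT q v w)
      = fun q : V4 => (v 1 * w 3 - w 1 * v 3) * q 0 + (v 0 * w 3 - w 0 * v 3) * q 1
          + (v 0 * w 2 - w 0 * v 2 + (v 1 * w 2 - w 1 * v 2)) := by
    funext q; simp [ωOT]; ring
  rw [h, (haffOT _ _ _ p).fderiv]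
  simp [prOT]

lemma diff_gOT (F G : ℝ → ℝ) (hF : ContDiff ℝ (⊤ : ℕ∞) F) (hG : ContDiff ℝ (⊤ : ℕ∞) G)
    (p v w : V4) (h01 : p 1 < p 0) (hFp : F (p 0) ≠ 0) (hGp : G (p 1) ≠ 0) :
    DifferentiableAt ℝ (fun q => gOT F G q v w) p := by
  have hd : p 0 - p 1 ≠ 0 := sub_ne_zero.mpr h01.ne'
  have h0 := (hprOT 0 p).differentiableAt
  have h1 := (hprOT 1 p).differentiableAt
  have hs : DifferentiableAt ℝ (fun q : V4 => q 0 - q 1) p := h0.sub h1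
  have hFq : DifferentiableAt ℝ (fun q : V4 => F (q 0)) p :=
    ((hF.differentiable (by simp)) (p 0)).comp p h0
  have hGq : DifferentiableAt ℝ (fun q : V4 => G (q 1)) p :=
    ((hG.differentiable (by simp)) (p 1)).comp p h1
  unfold gOT
  simp only [div_eq_mul_inv]
  have B1 : DifferentiableAt ℝ (fun q : V4 => (q 0 - q 1) * (F (q 0))⁻¹) p :=
    hs.mul (hFq.inv hFp)
  have B2 : DifferentiableAt ℝ (fun q : V4 => (q 0 - q 1) * (G (q 1))⁻¹) p :=
    hs.mul (hGq.inv hGp)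
  have B3 : DifferentiableAt ℝ (fun q : V4 => F (q 0) * (q 0 - q 1)⁻¹) p :=
    hFq.mul (hs.inv hd)
  have B4 : DifferentiableAt ℝ (fun q : V4 => G (q 1) * (q 0 - q 1)⁻¹) p :=
    hGq.mul (hs.inv hd)
  have C1 : DifferentiableAt ℝ (fun q : V4 => v 2 + q 1 * v 3) p :=
    (differentiableAt_const _).add (h1.mul (differentiableAt_const _))
  have C2 : DifferentiableAt ℝ (fun q : V4 => w 2 + q 1 * w 3) p :=
    (differentiableAt_const _).add (h1.mul (differentiableAt_const _))
  have C3 : DifferentiableAt ℝ (fun q : V4 => v 2 + q 0 * v 3) p :=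
    (differentiableAt_const _).add (h0.mul (differentiableAt_const _))
  have C4 : DifferentiableAt ℝ (fun q : V4 => w 2 + q 0 * w 3) p :=
    (differentiableAt_const _).add (h0.mul (differentiableAt_const _))
  exact (((B1.mul (differentiableAt_const _)).sub
      (B2.mul (differentiableAt_const _))).add
      (B3.mul (C1.mul C2))).sub (B4.mul (C3.mul C4))

lemma fderiv_dir_zero (f : V4 → ℝ) (p : V4) (i : Fin 4)
    (hf : DifferentiableAt ℝ f p)
    (hconst : ∀ t : ℝ, f (p + t • (Pi.single i (1:ℝ) : V4)) = f p) :
    fderiv ℝ f p (Pi.single i (1:ℝ)) = 0 := by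
  set e : V4 := Pi.single i (1:ℝ)
  have hc : HasDerivAt (fun t : ℝ => p + t • e) e 0 := by
    simpa using ((hasDerivAt_id (0:ℝ)).smul_const e).const_add p
  have hf' : HasFDerivAt f (fderiv ℝ f p) (p + (0:ℝ) • e) := by
    simpa using hf.hasFDerivAt
  have hcomp : HasDerivAt (fun t : ℝ => f (p + t • e)) (fderiv ℝ f p e) 0 := by
    simpa [Function.comp_def] using hf'.comp_hasDerivAt 0 hc
  have heq : (fun t : ℝ => f (p + t • e)) = fun _ => f p := funext hconst
  rw [heq] at hcomp
  exact hcomp.unique (hasDerivAt_const 0 _)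

/-- On the region `ξ > η`, `F(ξ) > 0`, `G(η) < 0`, the ortho-toric 2-form `ω` is
closed, the coordinate fields `∂/∂t`, `∂/∂z` are Killing for `g`, and they are
hamiltonian with respect to `ω` with momentum maps `ξ + η` and `ξη`. -/
theorem stmt9 (F G : ℝ → ℝ) (hF : ContDiff ℝ (⊤ : ℕ∞) F) (hG : ContDiff ℝ (⊤ : ℕ∞) G)
    (U : Set V4) (hU : U = {p | p 1 < p 0 ∧ 0 < F (p 0) ∧ G (p 1) < 0}) :
    -- ω is closed
    (∀ p ∈ U, ∀ u v w : V4,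
      fderiv ℝ (fun q => ωOT q v w) p u - fderiv ℝ (fun q => ωOT q u w) p v
        + fderiv ℝ (fun q => ωOT q u v) p w = 0) ∧
    -- ∂/∂t is Killing
    (∀ p ∈ U, ∀ v w : V4,
      fderiv ℝ (fun q => gOT F G q v w) p (Pi.single (2 : Fin 4) (1 : ℝ)) = 0) ∧
    -- ∂/∂z is Killing
    (∀ p ∈ U, ∀ v w : V4,
      fderiv ℝ (fun q => gOT F G q v w) p (Pi.single (3 : Fin 4) (1 : ℝ)) = 0) ∧
    -- ∂/∂t is hamiltonian with momentum map ξ + η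
    (∀ p ∈ U, ∀ v : V4,
      ωOT p (Pi.single (2 : Fin 4) (1 : ℝ)) v
        = -(fderiv ℝ (fun q : V4 => q 0 + q 1) p v)) ∧
    -- ∂/∂z is hamiltonian with momentum map ξη
    (∀ p ∈ U, ∀ v : V4,
      ωOT p (Pi.single (3 : Fin 4) (1 : ℝ)) v
        = -(fderiv ℝ (fun q : V4 => q 0 * q 1) p v)) := by
  subst hU
  refine ⟨?_, ?_, ?_, ?_, ?_⟩
  · intro p _ u v w
    rw [fderiv_ωOT, fderiv_ωOT, fderiv_ωOT]
    ring
  · rintro p ⟨h01, hFp, hGp⟩ v w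
    refine fderiv_dir_zero _ p 2 (diff_gOT F G hF hG p v w h01 hFp.ne' hGp.ne) ?_
    intro t
    simp [gOT, Pi.single_apply]
  · rintro p ⟨h01, hFp, hGp⟩ v w
    refine fderiv_dir_zero _ p 3 (diff_gOT F G hF hG p v w h01 hFp.ne' hGp.ne) ?_
    intro t
    simp [gOT, Pi.single_apply]
  · intro p _ v
    have h : HasFDerivAt (fun q : V4 => q 0 + q 1) (prOT 0 + prOT 1) p :=
      (hprOT 0 p).add (hprOT 1 p)
    rw [h.fderiv]
    simp [ωOT, prOT, Pi.single_apply]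
    ring
  · intro p _ v
    have h : HasFDerivAt (fun q : V4 => q 0 * q 1)
        (p 0 • prOT 1 + p 1 • prOT 0) p := (hprOT 0 p).mul (hprOT 1 p)
    rw [h.fderiv]
    simp [ωOT, prOT, Pi.single_apply]
    ring
end
end

section
/- Let F, G be smooth functions of one variable and suppose that the function s(ξ,η) = -(F''(ξ) - G''(η))/(6(ξ-η)), defined for ξ ≠ η on a connected open set, is of the form a(ξ+η) + bξη + c for constants a, b, c with b = 0. Then there exist constants k, ℓ, A, B₁, C₁, B₂, C₂ such that F(x) = kx⁴ + ℓx³ + Ax² + B₁x + C₁ and G(x) = kx⁴ + ℓx³ + Ax² + B₂x + C₂ on the relevant intervals, with a = -2k and c = -ℓ. -/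
lemma constOn (f : ℝ → ℝ) (hf : Differentiable ℝ f) {s : Set ℝ} (hs : Convex ℝ s)
    (hso : IsOpen s) (h : ∀ x ∈ s, deriv f x = 0) {x y : ℝ} (hx : x ∈ s) (hy : y ∈ s) :
    f x = f y := by
  apply hs.is_const_of_fderivWithin_eq_zero hf.differentiableOn _ hx hy
  intro z hz
  rw [fderivWithin_of_isOpen hso hz]
  have hd : HasDerivAt f 0 z := by
    have := (hf z).hasDerivAt
    rwa [h z hz] at this
  rw [hd.hasFDerivAt.fderiv]
  ext; simp

lemma quarticOf (f : ℝ → ℝ) (hf : ContDiff ℝ (⊤ : ℕ∞) f) {s : Set ℝ} (hso : IsOpen s)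
    (hconv : Convex ℝ s) {x₀ : ℝ} (hx₀ : x₀ ∈ s) (α β γ : ℝ)
    (h : ∀ x ∈ s, deriv (deriv f) x = α * x ^ 2 + β * x + γ) :
    ∃ B C, ∀ x ∈ s, f x = α/12 * x ^ 4 + β/6 * x ^ 3 + γ/2 * x ^ 2 + B * x + C := by
  have hf' : ContDiff ℝ (⊤ : ℕ∞) f := hf.of_le (by simp)
  have hf1 : Differentiable ℝ f ∧ ContDiff ℝ (⊤ : ℕ∞) (deriv f) := contDiff_infty_iff_deriv.mp hf'
  have hf2 : Differentiable ℝ (deriv f) := (contDiff_infty_iff_deriv.mp hf1.2).1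
  set Q : ℝ → ℝ := fun x => α/3 * x ^ 3 + β/2 * x ^ 2 + γ * x with hQdef
  have hQ : ∀ x : ℝ, HasDerivAt Q (α * x ^ 2 + β * x + γ) x := by
    intro x
    exact ((((hasDerivAt_pow 3 x).const_mul (α/3)).add
        ((hasDerivAt_pow 2 x).const_mul (β/2))).add
        ((hasDerivAt_id x).const_mul γ)).congr_deriv (by push_cast; ring)
  set B : ℝ := deriv f x₀ - Q x₀ with hBdef
  have hg : ∀ x ∈ s, deriv f x = Q x + B := by
    intro x hx
    have := constOn (fun t => deriv f t - Q t)
      (hf2.sub fun t => (hQ t).differentiableAt) hconv hso ?_ hx hx₀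
    · linarith
    · intro z hz
      rw [deriv_fun_sub (hf2 z) (hQ z).differentiableAt, (hQ z).deriv, h z hz]
      ring
  set R : ℝ → ℝ := fun x => α/12 * x ^ 4 + β/6 * x ^ 3 + γ/2 * x ^ 2 + B * x with hRdef
  have hR : ∀ x : ℝ, HasDerivAt R (Q x + B) x := by
    intro x
    exact (((((hasDerivAt_pow 4 x).const_mul (α/12)).add
        ((hasDerivAt_pow 3 x).const_mul (β/6))).add
        ((hasDerivAt_pow 2 x).const_mul (γ/2))).add
        ((hasDerivAt_id x).const_mul B)).congr_deriv (by push_cast [hQdef]; ring)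
  refine ⟨B, f x₀ - R x₀, ?_⟩
  intro x hx
  have := constOn (fun t => f t - R t)
    (hf1.1.sub fun t => (hR t).differentiableAt) hconv hso ?_ hx hx₀
  · simp only [hRdef] at this ⊢; linarith
  · intro z hz
    rw [deriv_fun_sub (hf1.1 z) (hR z).differentiableAt, (hR z).deriv, hg z hz]
    ring

/-- ODE-reduction for extremal ortho-toric Kähler surfaces: if the normalized
scalar curvature `s(ξ,η) = -(F''(ξ) - G''(η))/(6(ξ-η))` equals `a(ξ+η) + c`
(the case `b = 0` of an affine combination of the momentum maps) on a connected
open set, then `F` and `G` are quartics agreeing up to their linear and constant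
terms, with `a = -2k` and `c = -ℓ`. -/
theorem stmt12 (F G : ℝ → ℝ) (hF : ContDiff ℝ (⊤ : ℕ∞) F) (hG : ContDiff ℝ (⊤ : ℕ∞) G)
    (U : Set (ℝ × ℝ)) (hUopen : IsOpen U) (hUconn : IsConnected U)
    (hne : ∀ p ∈ U, p.1 ≠ p.2)
    (a c : ℝ)
    (hs : ∀ p ∈ U,
      -(deriv (deriv F) p.1 - deriv (deriv G) p.2) / (6 * (p.1 - p.2))
        = a * (p.1 + p.2) + c) :
    ∃ k ℓ A B₁ C₁ B₂ C₂ : ℝ,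
      (∀ x : ℝ, (∃ y, (x, y) ∈ U) →
        F x = k * x ^ 4 + ℓ * x ^ 3 + A * x ^ 2 + B₁ * x + C₁) ∧
      (∀ y : ℝ, (∃ x, (x, y) ∈ U) →
        G y = k * y ^ 4 + ℓ * y ^ 3 + A * y ^ 2 + B₂ * y + C₂) ∧
      a = -2 * k ∧ c = -ℓ := by
  obtain ⟨p₀, hp₀⟩ := hUconn.nonempty
  set φ : ℝ × ℝ → ℝ := fun p => deriv (deriv F) p.1 + 6 * a * p.1 ^ 2 + 6 * c * p.1 with hφ
  set ψ : ℝ × ℝ → ℝ := fun p => deriv (deriv G) p.2 + 6 * a * p.2 ^ 2 + 6 * c * p.2 with hψ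
  -- key pointwise identity
  have key : ∀ p ∈ U, φ p = ψ p := by
    intro p hp
    have h := hs p hp
    have hd : (6 : ℝ) * (p.1 - p.2) ≠ 0 := by
      have := sub_ne_zero.mpr (hne p hp); positivity
    rw [div_eq_iff hd] at h
    simp only [hφ, hψ]
    linear_combination -h
  set v : ℝ := φ p₀ with hv
  -- φ is constant on U
  have hcF2 : Continuous (deriv (deriv F)) := by
    have h1 : ContDiff ℝ (⊤ : ℕ∞) (deriv F) :=
      (contDiff_infty_iff_deriv.mp (hF.of_le (by simp))).2
    exact (contDiff_infty_iff_deriv.mp h1).2.continuous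
  have hφcont : Continuous φ := by
    apply Continuous.add
    apply Continuous.add
    · exact hcF2.comp continuous_fst
    · continuity
    · continuity
  -- local constancy on rectangles
  have hloc : ∀ p ∈ U, ∃ s t : Set ℝ, IsOpen s ∧ IsOpen t ∧ p.1 ∈ s ∧ p.2 ∈ t ∧
      s ×ˢ t ⊆ U := by
    intro p hp
    obtain ⟨s, t, hso, hps, hto, hpt, hst⟩ := mem_nhds_prod_iff'.mp (hUopen.mem_nhds hp)
    exact ⟨s, t, hso, hto, hps, hpt, hst⟩
  have hSopen : IsOpen {p | p ∈ U ∧ φ p = v} := by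
    rw [isOpen_iff_mem_nhds]
    rintro p ⟨hp, hpv⟩
    obtain ⟨s, t, hso, hto, hps, hpt, hst⟩ := hloc p hp
    have hmem : s ×ˢ t ∈ nhds p := (hso.prod hto).mem_nhds (by exact ⟨hps, hpt⟩)
    refine Filter.mem_of_superset hmem ?_
    rintro ⟨x, y⟩ ⟨hx, hy⟩
    have h1 : ((x, p.2) : ℝ × ℝ) ∈ U := hst ⟨hx, hpt⟩
    have h2 : ((p.1, p.2) : ℝ × ℝ) ∈ U := hst ⟨hps, hpt⟩
    have e1 : φ (x, y) = φ (x, p.2) := rfl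
    have e2 : ψ (x, p.2) = ψ (p.1, p.2) := rfl
    refine ⟨hst ⟨hx, hy⟩, ?_⟩
    rw [e1, key _ h1, e2, ← key _ h2]
    exact hpv
  have hTopen : IsOpen {p | p ∈ U ∧ φ p ≠ v} :=
    hUopen.inter (isOpen_ne_fun hφcont continuous_const)
  have hUsub : U ⊆ {p | p ∈ U ∧ φ p = v} := by
    apply hUconn.isPreconnected.subset_left_of_subset_union hSopen hTopen
    · rw [Set.disjoint_left]; rintro p ⟨_, h1⟩ ⟨_, h2⟩; exact h2 h1
    · intro p hp
      by_cases h : φ p = v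
      · exact Or.inl ⟨hp, h⟩
      · exact Or.inr ⟨hp, h⟩
    · exact ⟨p₀, hp₀, hp₀, rfl⟩
  have hφconst : ∀ p ∈ U, φ p = v := fun p hp => (hUsub hp).2
  -- the projections are open convex sets
  have hI1open : IsOpen (Prod.fst '' U) := isOpenMap_fst U hUopen
  have hI2open : IsOpen (Prod.snd '' U) := isOpenMap_snd U hUopen
  have hI1conv : Convex ℝ (Prod.fst '' U) :=
    ((hUconn.isPreconnected.image _ continuous_fst.continuousOn).ordConnected).convex
  have hI2conv : Convex ℝ (Prod.snd '' U) :=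
    ((hUconn.isPreconnected.image _ continuous_snd.continuousOn).ordConnected).convex
  have hx₀ : p₀.1 ∈ Prod.fst '' U := ⟨p₀, hp₀, rfl⟩
  have hy₀ : p₀.2 ∈ Prod.snd '' U := ⟨p₀, hp₀, rfl⟩
  -- derivative identities on the projections
  have hF2 : ∀ x ∈ Prod.fst '' U, deriv (deriv F) x = -(6*a) * x ^ 2 + -(6*c) * x + v := by
    rintro x ⟨p, hp, rfl⟩
    have := hφconst p hp
    simp only [hφ] at this; linarith
  have hG2 : ∀ y ∈ Prod.snd '' U, deriv (deriv G) y = -(6*a) * y ^ 2 + -(6*c) * y + v := by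
    rintro y ⟨p, hp, rfl⟩
    have h1 := key p hp
    have h2 := hφconst p hp
    simp only [hφ, hψ] at h1 h2; linarith
  obtain ⟨B₁, C₁, hFq⟩ := quarticOf F hF hI1open hI1conv hx₀ _ _ _ hF2
  obtain ⟨B₂, C₂, hGq⟩ := quarticOf G hG hI2open hI2conv hy₀ _ _ _ hG2
  refine ⟨-(6*a)/12, -(6*c)/6, v/2, B₁, C₁, B₂, C₂, ?_, ?_, by ring, by ring⟩
  · rintro x ⟨y, hxy⟩
    exact hFq x ⟨(x, y), hxy, rfl⟩
  · rintro y ⟨x, hxy⟩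
    exact hGq y ⟨(x, y), hxy, rfl⟩
end

section
/- Let w(x,y,z) be defined on a connected open subset of ℝ³ by z·w = 1/(F(z) + G(x,y)) for smooth functions F of one variable and G of two variables, with F(z) + G(x,y) ≠ 0, and suppose w is harmonic in (x,y), i.e. w_{xx} + w_{yy} = 0 for each fixed z. Then on this open set either F is constant or G is constant. -/
open Metric Set

private lemma mem3 {U : Set (ℝ × ℝ × ℝ)} {x₀ y₀ z₀ ε : ℝ}
    (h : Metric.ball ((x₀, y₀, z₀) : ℝ × ℝ × ℝ) ε ⊆ U) {x y z : ℝ}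
    (hx : dist x x₀ < ε) (hy : dist y y₀ < ε) (hzz : dist z z₀ < ε) : (x, y, z) ∈ U := by
  apply h
  simp only [Metric.mem_ball, Prod.dist_eq]
  exact max_lt hx (max_lt hy hzz)

private lemma sliceX_hasDerivAt {H : ℝ × ℝ → ℝ} {L : (ℝ × ℝ) →L[ℝ] ℝ} {x y : ℝ}
    (h : HasFDerivAt H L (x, y)) :
    HasDerivAt (fun t => H (t, y)) (L (1, 0)) x := by
  have h1 : HasDerivAt (fun t : ℝ => (t, y)) ((1 : ℝ), (0 : ℝ)) x :=
    (hasDerivAt_id x).prodMk (hasDerivAt_const x y)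
  exact h.comp_hasDerivAt x h1

private lemma sliceY_hasDerivAt {H : ℝ × ℝ → ℝ} {L : (ℝ × ℝ) →L[ℝ] ℝ} {x y : ℝ}
    (h : HasFDerivAt H L (x, y)) :
    HasDerivAt (fun t => H (x, t)) (L (0, 1)) y := by
  have h1 : HasDerivAt (fun t : ℝ => (x, t)) ((0 : ℝ), (1 : ℝ)) y :=
    (hasDerivAt_const y x).prodMk (hasDerivAt_id y)
  exact h.comp_hasDerivAt y h1

/-- The key pointwise separation identity `(ΔG)(F z + G) = 2 |∇G|²`. -/
private lemma starIdentity (F : ℝ → ℝ) (G : ℝ → ℝ → ℝ)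
    (hG : ContDiff ℝ (⊤ : ℕ∞) (fun p : ℝ × ℝ => G p.1 p.2))
    (U : Set (ℝ × ℝ × ℝ)) (hUopen : IsOpen U)
    (hz : ∀ p ∈ U, p.2.2 ≠ 0)
    (hden : ∀ p ∈ U, F p.2.2 + G p.1 p.2.1 ≠ 0)
    (w : ℝ → ℝ → ℝ → ℝ)
    (hw : ∀ p ∈ U, p.2.2 * w p.1 p.2.1 p.2.2 = 1 / (F p.2.2 + G p.1 p.2.1))
    (hharm : ∀ p ∈ U,
      deriv (fun x => deriv (fun x' => w x' p.2.1 p.2.2) x) p.1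
        + deriv (fun y => deriv (fun y' => w p.1 y' p.2.2) y) p.2.1 = 0)
    (x₀ y₀ z₀ : ℝ) (hp : (x₀, y₀, z₀) ∈ U) :
    (deriv (deriv (fun s => G s y₀)) x₀ + deriv (deriv (fun s => G x₀ s)) y₀)
        * (F z₀ + G x₀ y₀)
      = 2 * ((deriv (fun s => G s y₀) x₀) ^ 2 + (deriv (fun s => G x₀ s) y₀) ^ 2) := by
  obtain ⟨ε, hε, hball⟩ := Metric.isOpen_iff.1 hUopen _ hp
  have hz0 : z₀ ≠ 0 := hz _ hp
  have hd0 : F z₀ + G x₀ y₀ ≠ 0 := hden _ hp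
  set g : ℝ → ℝ := fun s => G s y₀ with hgdef
  set k : ℝ → ℝ := fun s => G x₀ s with hkdef
  have hgC : ContDiff ℝ (⊤ : ℕ∞) g := hG.comp (contDiff_id.prodMk contDiff_const)
  have hkC : ContDiff ℝ (⊤ : ℕ∞) k := hG.comp (contDiff_const.prodMk contDiff_id)
  have hgd : Differentiable ℝ g := hgC.differentiable (by simp)
  have hkd : Differentiable ℝ k := hkC.differentiable (by simp)
  have hgd2 : Differentiable ℝ (deriv g) := by
    have hg2 : ContDiff ℝ ((1 : WithTop ℕ∞) + 1) g := hgC.of_le (by exact WithTop.coe_le_coe.2 le_top)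
    exact (contDiff_succ_iff_deriv.1 hg2).2.2.differentiable (by simp)
  have hkd2 : Differentiable ℝ (deriv k) := by
    have hk2 : ContDiff ℝ ((1 : WithTop ℕ∞) + 1) k := hkC.of_le (by exact WithTop.coe_le_coe.2 le_top)
    exact (contDiff_succ_iff_deriv.1 hk2).2.2.differentiable (by simp)
  -- x-direction
  have hU3x : ∀ x : ℝ, dist x x₀ < ε → (x, y₀, z₀) ∈ U := fun x hx =>
    mem3 hball hx (by simpa using hε) (by simpa using hε)
  have hU3y : ∀ y : ℝ, dist y y₀ < ε → (x₀, y, z₀) ∈ U := fun y hy =>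
    mem3 hball (by simpa using hε) hy (by simpa using hε)
  have hwx : ∀ x ∈ Metric.ball x₀ ε, w x y₀ z₀ = z₀⁻¹ * (F z₀ + g x)⁻¹ := by
    intro x hx
    have hmem := hU3x x (Metric.mem_ball.1 hx)
    have h1 := hw _ hmem
    have : w x y₀ z₀ = z₀⁻¹ * (z₀ * w x y₀ z₀) := by field_simp
    rw [this, h1, one_div]
  have hwy : ∀ y ∈ Metric.ball y₀ ε, w x₀ y z₀ = z₀⁻¹ * (F z₀ + k y)⁻¹ := by
    intro y hy
    have hmem := hU3y y (Metric.mem_ball.1 hy)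
    have h1 := hw _ hmem
    have : w x₀ y z₀ = z₀⁻¹ * (z₀ * w x₀ y z₀) := by field_simp
    rw [this, h1, one_div]
  have hdenx : ∀ x ∈ Metric.ball x₀ ε, F z₀ + g x ≠ 0 := fun x hx =>
    hden _ (hU3x x (Metric.mem_ball.1 hx))
  have hdeny : ∀ y ∈ Metric.ball y₀ ε, F z₀ + k y ≠ 0 := fun y hy =>
    hden _ (hU3y y (Metric.mem_ball.1 hy))
  -- first derivatives of the explicit formula
  have hwdx : ∀ x ∈ Metric.ball x₀ ε,
      deriv (fun s => w s y₀ z₀) x = z₀⁻¹ * (-(deriv g x) / (F z₀ + g x) ^ 2) := by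
    intro x hx
    have hev : (fun s => w s y₀ z₀) =ᶠ[nhds x] (fun s => z₀⁻¹ * (F z₀ + g s)⁻¹) := by
      filter_upwards [Metric.isOpen_ball.mem_nhds hx] with t ht using hwx t ht
    rw [hev.deriv_eq]
    have hc : HasDerivAt (fun s => F z₀ + g s) (deriv g x) x :=
      ((hgd x).hasDerivAt).const_add (F z₀)
    exact ((hc.inv (hdenx x hx)).const_mul _).deriv
  have hwdy : ∀ y ∈ Metric.ball y₀ ε,
      deriv (fun s => w x₀ s z₀) y = z₀⁻¹ * (-(deriv k y) / (F z₀ + k y) ^ 2) := by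
    intro y hy
    have hev : (fun s => w x₀ s z₀) =ᶠ[nhds y] (fun s => z₀⁻¹ * (F z₀ + k s)⁻¹) := by
      filter_upwards [Metric.isOpen_ball.mem_nhds hy] with t ht using hwy t ht
    rw [hev.deriv_eq]
    have hc : HasDerivAt (fun s => F z₀ + k s) (deriv k y) y :=
      ((hkd y).hasDerivAt).const_add (F z₀)
    exact ((hc.inv (hdeny y hy)).const_mul _).deriv
  -- second derivatives
  have hx2 : deriv (fun x => deriv (fun s => w s y₀ z₀) x) x₀
      = z₀⁻¹ * ((-(deriv (deriv g) x₀) * (F z₀ + g x₀) ^ 2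
          - -(deriv g x₀) * ((2 : ℕ) * (F z₀ + g x₀) ^ (2 - 1) * deriv g x₀))
          / ((F z₀ + g x₀) ^ 2) ^ 2) := by
    have hev : (fun x => deriv (fun s => w s y₀ z₀) x)
        =ᶠ[nhds x₀] (fun x => z₀⁻¹ * (-(deriv g x) / (F z₀ + g x) ^ 2)) := by
      filter_upwards [Metric.isOpen_ball.mem_nhds (Metric.mem_ball_self hε)] with t ht using
        hwdx t ht
    rw [hev.deriv_eq]
    have hnum : HasDerivAt (fun x => -(deriv g x)) (-(deriv (deriv g) x₀)) x₀ :=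
      ((hgd2 x₀).hasDerivAt).neg
    have hc : HasDerivAt (fun s => F z₀ + g s) (deriv g x₀) x₀ :=
      ((hgd x₀).hasDerivAt).const_add (F z₀)
    have hpow := hc.pow 2
    have hdz : (F z₀ + g x₀) ^ 2 ≠ 0 :=
      pow_ne_zero _ (hdenx x₀ (Metric.mem_ball_self hε))
    exact ((hnum.div hpow hdz).const_mul _).deriv
  have hy2 : deriv (fun y => deriv (fun s => w x₀ s z₀) y) y₀
      = z₀⁻¹ * ((-(deriv (deriv k) y₀) * (F z₀ + k y₀) ^ 2
          - -(deriv k y₀) * ((2 : ℕ) * (F z₀ + k y₀) ^ (2 - 1) * deriv k y₀))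
          / ((F z₀ + k y₀) ^ 2) ^ 2) := by
    have hev : (fun y => deriv (fun s => w x₀ s z₀) y)
        =ᶠ[nhds y₀] (fun y => z₀⁻¹ * (-(deriv k y) / (F z₀ + k y) ^ 2)) := by
      filter_upwards [Metric.isOpen_ball.mem_nhds (Metric.mem_ball_self hε)] with t ht using
        hwdy t ht
    rw [hev.deriv_eq]
    have hnum : HasDerivAt (fun y => -(deriv k y)) (-(deriv (deriv k) y₀)) y₀ :=
      ((hkd2 y₀).hasDerivAt).neg
    have hc : HasDerivAt (fun s => F z₀ + k s) (deriv k y₀) y₀ :=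
      ((hkd y₀).hasDerivAt).const_add (F z₀)
    have hpow := hc.pow 2
    have hdz : (F z₀ + k y₀) ^ 2 ≠ 0 :=
      pow_ne_zero _ (hdeny y₀ (Metric.mem_ball_self hε))
    exact ((hnum.div hpow hdz).const_mul _).deriv
  have hsum := hharm _ hp
  simp only at hsum
  rw [hx2, hy2] at hsum
  have hgx : g x₀ = G x₀ y₀ := rfl
  have hky : k y₀ = G x₀ y₀ := rfl
  rw [hgx, hky] at hsum
  set a := deriv g x₀
  set c := deriv k y₀
  set A := deriv (deriv g) x₀
  set C := deriv (deriv k) y₀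
  set d := F z₀ + G x₀ y₀
  have key : d * ((A + C) * d) = d * (2 * (a ^ 2 + c ^ 2)) := by
    field_simp at hsum
    norm_num at hsum
    nlinarith [hsum, sq_nonneg d]
  have := mul_left_cancel₀ hd0 key
  exact this

private lemma second_slice {f : ℂ → ℝ} {φ : ℝ → ℝ} {γ : ℝ → ℂ} {v : ℂ} {O : Set ℂ}
    (hO : IsOpen O) (hf : ∀ c ∈ O, ContDiffAt ℝ 2 f c) (hγ : ∀ s, HasDerivAt γ v s)
    (hγc : Continuous γ) (hφ : ∀ s, γ s ∈ O → φ s = f (γ s)) (t : ℝ) (c : ℂ)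
    (htc : γ t = c) (hc : c ∈ O) :
    deriv (fun x => deriv φ x) t = fderiv ℝ (fderiv ℝ f) c v v := by
  subst htc
  have hpre : IsOpen (γ ⁻¹' O) := hO.preimage hγc
  have h1 : ∀ s ∈ γ ⁻¹' O, deriv φ s = fderiv ℝ f (γ s) v := by
    intro s hs
    have hev : φ =ᶠ[nhds s] f ∘ γ := by
      filter_upwards [hpre.mem_nhds hs] with r hr using hφ r hr
    rw [hev.deriv_eq]
    exact (((hf _ hs).differentiableAt (by norm_num)).hasFDerivAt.comp_hasDerivAt s (hγ s)).deriv
  have hev : (fun x => deriv φ x) =ᶠ[nhds t] (fun x => fderiv ℝ f (γ x) v) := by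
    filter_upwards [hpre.mem_nhds hc] with r hr using h1 r hr
  rw [hev.deriv_eq]
  have hd : DifferentiableAt ℝ (fderiv ℝ f) (γ t) :=
    ((hf _ hc).fderiv_right (m := 1) (by norm_num)).differentiableAt (by norm_num)
  exact (((ContinuousLinearMap.apply ℝ ℝ v).hasFDerivAt).comp_hasDerivAt t
    (hd.hasFDerivAt.comp_hasDerivAt t (hγ t))).deriv

private lemma G_analytic (F : ℝ → ℝ) (G : ℝ → ℝ → ℝ)
    (hG : ContDiff ℝ (⊤ : ℕ∞) (fun p : ℝ × ℝ => G p.1 p.2))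
    (U : Set (ℝ × ℝ × ℝ)) (hUopen : IsOpen U)
    (hz : ∀ p ∈ U, p.2.2 ≠ 0)
    (hden : ∀ p ∈ U, F p.2.2 + G p.1 p.2.1 ≠ 0)
    (w : ℝ → ℝ → ℝ → ℝ)
    (hw : ∀ p ∈ U, p.2.2 * w p.1 p.2.1 p.2.2 = 1 / (F p.2.2 + G p.1 p.2.1))
    (hharm : ∀ p ∈ U,
      deriv (fun x => deriv (fun x' => w x' p.2.1 p.2.2) x) p.1
        + deriv (fun y => deriv (fun y' => w p.1 y' p.2.2) y) p.2.1 = 0)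
    (x₀ y₀ z₀ : ℝ) (hp : (x₀, y₀, z₀) ∈ U) :
    AnalyticAt ℝ (fun q : ℝ × ℝ => G q.1 q.2) (x₀, y₀) := by
  obtain ⟨ε, hε, hball⟩ := Metric.isOpen_iff.1 hUopen _ hp
  have hz0 : z₀ ≠ 0 := hz _ hp
  set O : Set ℂ := {c | dist c.re x₀ < ε ∧ dist c.im y₀ < ε} with hOdef
  have hO : IsOpen O :=
    (isOpen_lt (Complex.continuous_re.dist continuous_const) continuous_const).inter
      (isOpen_lt (Complex.continuous_im.dist continuous_const) continuous_const)
  have hOU : ∀ c ∈ O, (c.re, c.im, z₀) ∈ U := fun c hc =>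
    mem3 hball hc.1 hc.2 (by simpa using hε)
  set Gc : ℂ → ℝ := fun c => G c.re c.im with hGcdef
  have hGc : ContDiff ℝ (⊤ : ℕ∞) Gc := by
    have := hG.comp (Complex.reCLM.contDiff.prodMk Complex.imCLM.contDiff)
    exact this
  set f : ℂ → ℝ := fun c => z₀⁻¹ * (F z₀ + Gc c)⁻¹ with hfdef
  have hfC : ∀ c ∈ O, ContDiffAt ℝ (⊤ : ℕ∞) f c := fun c hc =>
    contDiffAt_const.mul ((contDiffAt_const.add hGc.contDiffAt).inv (hden _ (hOU c hc)))
  have hfC2 : ∀ c ∈ O, ContDiffAt ℝ 2 f c := fun c hc =>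
    (hfC c hc).of_le (by exact WithTop.coe_le_coe.2 le_top)
  have hwf : ∀ c ∈ O, w c.re c.im z₀ = f c := by
    intro c hc
    have h1 := hw _ (hOU c hc)
    simp only at h1
    have : w c.re c.im z₀ = z₀⁻¹ * (z₀ * w c.re c.im z₀) := by field_simp
    rw [this, h1, one_div]
  set c₀ : ℂ := ⟨x₀, y₀⟩ with hc₀def
  have hc₀ : c₀ ∈ O := by simp [hOdef, c₀, hε]
  have hharmf : InnerProductSpace.HarmonicAt f c₀ := by
    refine ⟨hfC2 c₀ hc₀, ?_⟩
    filter_upwards [hO.mem_nhds hc₀] with c hc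
    rw [InnerProductSpace.laplacian_eq_iteratedFDeriv_complexPlane]
    simp only [iteratedFDeriv_two_apply, Matrix.cons_val_zero, Matrix.cons_val_one,
      Pi.zero_apply]
    have hx := second_slice (φ := fun x' => w x' c.im z₀)
      (γ := fun s : ℝ => (s : ℂ) + (c.im : ℂ) * Complex.I) (v := 1) hO hfC2
      (fun s => (((hasDerivAt_id s).ofReal_comp).add_const _).congr_deriv (by simp))
      (by fun_prop) (fun s hs => by have := hwf _ hs; simpa using this) c.re c
      (Complex.ext (by simp) (by simp)) hc
    have hy := second_slice (φ := fun y' => w c.re y' z₀)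
      (γ := fun s : ℝ => (c.re : ℂ) + (s : ℂ) * Complex.I) (v := Complex.I) hO hfC2
      (fun s => ((((hasDerivAt_id s).ofReal_comp).mul_const Complex.I).const_add _).congr_deriv
        (by simp))
      (by fun_prop) (fun s hs => by have := hwf _ hs; simpa using this) c.im c
      (Complex.ext (by simp) (by simp)) hc
    have hsum := hharm _ (hOU c hc)
    simp only at hsum
    rw [hx, hy] at hsum
    exact hsum
  have hfA := HarmonicAt.analyticAt hharmf
  have hGcA : AnalyticAt ℝ Gc c₀ := by
    have hne : z₀ * f c₀ ≠ 0 := by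
      have := hden _ (hOU c₀ hc₀)
      simp only [hfdef]
      exact mul_ne_zero hz0 (mul_ne_zero (inv_ne_zero hz0) (inv_ne_zero this))
    have := ((analyticAt_const.mul hfA).inv hne).sub (analyticAt_const (v := F z₀))
    have heq : Gc = ((fun _ => z₀) * f)⁻¹ - fun _ => F z₀ := by
      funext c
      simp only [Pi.sub_apply, Pi.inv_apply, Pi.mul_apply, hfdef]
      rw [mul_inv_cancel_left₀ hz0, inv_inv, add_sub_cancel_left]
    rw [heq]
    exact this
  have hL : AnalyticAt ℝ (fun q : ℝ × ℝ => (Complex.equivRealProdCLM.symm q : ℂ)) (x₀, y₀) :=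
    (Complex.equivRealProdCLM.symm : (ℝ × ℝ) →L[ℝ] ℂ).analyticAt _
  have := hGcA.comp_of_eq hL (Complex.ext (by simp [c₀]) (by simp [c₀]))
  convert this using 1
  funext q
  simp [hGcdef]

/-- Separation of variables in the classification of almost Kähler 4-manifolds
of Calabi type: if `z·w = 1/(F(z) + G(x,y))` and `w` is harmonic in `(x,y)` on a
connected open set, then `F` is constant or `G` is constant on that set. -/
theorem stmt16 (F : ℝ → ℝ) (G : ℝ → ℝ → ℝ)
    (hF : ContDiff ℝ (⊤ : ℕ∞) F) (hG : ContDiff ℝ (⊤ : ℕ∞) (fun p : ℝ × ℝ => G p.1 p.2))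
    (U : Set (ℝ × ℝ × ℝ)) (hUopen : IsOpen U) (hUconn : IsConnected U)
    (hz : ∀ p ∈ U, p.2.2 ≠ 0)
    (hden : ∀ p ∈ U, F p.2.2 + G p.1 p.2.1 ≠ 0)
    (w : ℝ → ℝ → ℝ → ℝ)
    (hw : ∀ p ∈ U, p.2.2 * w p.1 p.2.1 p.2.2 = 1 / (F p.2.2 + G p.1 p.2.1))
    (hharm : ∀ p ∈ U,
      deriv (fun x => deriv (fun x' => w x' p.2.1 p.2.2) x) p.1
        + deriv (fun y => deriv (fun y' => w p.1 y' p.2.2) y) p.2.1 = 0) :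
    (∀ p ∈ U, ∀ q ∈ U, F p.2.2 = F q.2.2) ∨
    (∀ p ∈ U, ∀ q ∈ U, G p.1 p.2.1 = G q.1 q.2.1) := by
  by_cases hall : ∀ p ∈ U, deriv F p.2.2 = 0
  · -- F is constant
    left
    set S : Set ℝ := (fun r : ℝ × ℝ × ℝ => r.2.2) '' U with hSdef
    have hScon : IsPreconnected S :=
      (hUconn.image _ (continuous_snd.comp continuous_snd).continuousOn).isPreconnected
    have hS0 : ∀ z ∈ S, deriv F z = 0 := by
      rintro z ⟨r, hr, rfl⟩
      exact hall r hr
    have key : ∀ a ∈ S, ∀ b ∈ S, a < b → F a = F b := by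
      intro a ha b hb hab
      obtain ⟨c, hc1, hc2⟩ := exists_deriv_eq_slope F hab hF.continuous.continuousOn
        (hF.differentiable (by simp)).differentiableOn
      have hcS : c ∈ S := hScon.ordConnected.out ha hb ⟨le_of_lt hc1.1, le_of_lt hc1.2⟩
      rw [hS0 c hcS] at hc2
      have hba : b - a ≠ 0 := sub_ne_zero.2 hab.ne'
      have := (div_eq_zero_iff.1 hc2.symm).resolve_right hba
      linarith [sub_eq_zero.1 this]
    intro p hp q hq
    have hpS : p.2.2 ∈ S := ⟨p, hp, rfl⟩
    have hqS : q.2.2 ∈ S := ⟨q, hq, rfl⟩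
    rcases lt_trichotomy p.2.2 q.2.2 with h | h | h
    · exact key _ hpS _ hqS h
    · rw [h]
    · exact (key _ hqS _ hpS h).symm
  · -- G is constant
    right
    push_neg at hall
    obtain ⟨p₁, hp₁U, hne⟩ := hall
    obtain ⟨x₁, y₁, z₁⟩ := p₁
    simp only at hne
    obtain ⟨ε, hε, hball⟩ := Metric.isOpen_iff.1 hUopen _ hp₁U
    -- find a nearby z with a different F-value
    have hz₂ : ∃ z₂, dist z₂ z₁ < ε ∧ F z₂ ≠ F z₁ := by
      by_contra hcon
      push_neg at hcon
      have hev : F =ᶠ[nhds z₁] fun _ => F z₁ := by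
        filter_upwards [Metric.ball_mem_nhds z₁ hε] with t ht using
          hcon t (by simpa [Metric.mem_ball] using ht)
      have : deriv F z₁ = 0 := by rw [hev.deriv_eq]; simp
      exact hne this
    -- the gradient of G vanishes on a 2-ball
    have hgrad : ∀ x y, dist x x₁ < ε → dist y y₁ < ε →
        deriv (fun s => G s y) x = 0 ∧ deriv (fun s => G x s) y = 0 := by
      intro x y hx hy
      obtain ⟨z₂, hz₂d, hz₂ne⟩ := hz₂
      have h1 := starIdentity F G hG U hUopen hz hden w hw hharm x y z₁
        (mem3 hball hx hy (by simpa using hε))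
      have h2 := starIdentity F G hG U hUopen hz hden w hw hharm x y z₂
        (mem3 hball hx hy hz₂d)
      have hL : deriv (deriv fun s => G s y) x + deriv (deriv fun s => G x s) y = 0 := by
        by_contra hL0
        apply hz₂ne
        have hdiff : (deriv (deriv fun s => G s y) x + deriv (deriv fun s => G x s) y)
            * (F z₂ - F z₁) = 0 := by linarith
        rcases mul_eq_zero.1 hdiff with h | h
        · exact absurd h hL0
        · linarith [sub_eq_zero.1 h]
      rw [hL, zero_mul] at h1
      constructor
      · nlinarith [sq_nonneg (deriv (fun s => G s y) x), sq_nonneg (deriv (fun s => G x s) y)]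
      · nlinarith [sq_nonneg (deriv (fun s => G s y) x), sq_nonneg (deriv (fun s => G x s) y)]
    -- G is constant on the 2-ball
    set Gu : ℝ × ℝ → ℝ := fun q => G q.1 q.2 with hGu_def
    have hGud : Differentiable ℝ Gu := hG.differentiable (by simp)
    have hconst : ∀ q ∈ Metric.ball ((x₁, y₁) : ℝ × ℝ) ε, Gu q = G x₁ y₁ := by
      have hdiff : DifferentiableOn ℝ Gu (Metric.ball ((x₁, y₁) : ℝ × ℝ) ε) :=
        hGud.differentiableOn
      have hzero : ∀ q ∈ Metric.ball ((x₁, y₁) : ℝ × ℝ) ε,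
          fderivWithin ℝ Gu (Metric.ball ((x₁, y₁) : ℝ × ℝ) ε) q = 0 := by
        intro q hq
        rw [fderivWithin_of_isOpen Metric.isOpen_ball hq]
        rw [Metric.mem_ball, Prod.dist_eq] at hq
        have hq1 : dist q.1 x₁ < ε := lt_of_le_of_lt (le_max_left _ _) hq
        have hq2 : dist q.2 y₁ < ε := lt_of_le_of_lt (le_max_right _ _) hq
        obtain ⟨h10, h01⟩ := hgrad q.1 q.2 hq1 hq2
        have hfd : HasFDerivAt Gu (fderiv ℝ Gu q) q := (hGud q).hasFDerivAt
        have hfd' : HasFDerivAt Gu (fderiv ℝ Gu q) (q.1, q.2) := hfd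
        have e1 : fderiv ℝ Gu q (1, 0) = 0 := by
          have h := (sliceX_hasDerivAt hfd').deriv
          rw [← h]; exact h10
        have e2 : fderiv ℝ Gu q (0, 1) = 0 := by
          have h := (sliceY_hasDerivAt hfd').deriv
          rw [← h]; exact h01
        apply ContinuousLinearMap.ext
        intro v
        have hv : v = v.1 • ((1 : ℝ), (0 : ℝ)) + v.2 • ((0 : ℝ), (1 : ℝ)) := by
          simp [Prod.ext_iff]
        rw [hv, map_add, map_smul, map_smul, e1, e2]
        simp
      intro q hq
      exact (convex_ball _ _).is_const_of_fderivWithin_eq_zero hdiff hzero hq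
        (Metric.mem_ball_self hε)
    -- analytic continuation over the projection of U
    set V : Set (ℝ × ℝ) := (fun r : ℝ × ℝ × ℝ => (r.1, r.2.1)) '' U with hVdef
    have hVconn : IsPreconnected V :=
      (hUconn.image _ (continuous_fst.prodMk (continuous_fst.comp continuous_snd)).continuousOn).isPreconnected
    have han : AnalyticOnNhd ℝ (fun q : ℝ × ℝ => Gu q - G x₁ y₁) V := fun q hq => by
        obtain ⟨r, hr, rfl⟩ := hq
        exact (G_analytic F G hG U hUopen hz hden w hw hharm r.1 r.2.1 r.2.2 hr).sub
          analyticAt_const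
    have hev0 : (fun q : ℝ × ℝ => Gu q - G x₁ y₁) =ᶠ[nhds ((x₁, y₁) : ℝ × ℝ)] 0 := by
      filter_upwards [Metric.ball_mem_nhds _ hε] with q hq
      simp [hconst q hq]
    have h0V : ((x₁, y₁) : ℝ × ℝ) ∈ V := ⟨(x₁, y₁, z₁), hp₁U, rfl⟩
    have hEq := han.eqOn_zero_of_preconnected_of_eventuallyEq_zero hVconn h0V hev0
    intro p hp q hq
    have h1 := hEq (⟨p, hp, rfl⟩ : (p.1, p.2.1) ∈ V)
    have h2 := hEq (⟨q, hq, rfl⟩ : (q.1, q.2.1) ∈ V)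
    simp only [Pi.zero_apply, sub_eq_zero] at h1 h2
    exact h1.trans h2.symm
end

section
/- Let V be a 4-dimensional real inner product space with orthogonal complex structures I and J where J is compatible with a fixed orientation and I with the opposite orientation (so I and J commute and IJ = JI is a symmetric involution). Let A : V → V be a nonzero skew-symmetric endomorphism that commutes with I and anticommutes with J, and let K ∈ V be a nonzero vector orthogonal to both JK and IK. If b, c ∈ ℝ satisfy bA(K) + cJA(K) = IA(K) and A(K) ≠ 0, then b = 0 and c = ±1; consequently JA(K) = ±IA(K). -/
open RealInnerProductSpace

/-- Pointwise linear algebra in the proof of Lemma 10 (almost Kähler case):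
for a nonzero skew endomorphism `A` of a 4-dimensional inner product space
commuting with `I` and anticommuting with `J` (where `I`, `J` are commuting
orthogonal complex structures), and `K` a nonzero vector orthogonal to `JK`
and `IK`, the relation `bA(K) + cJA(K) = IA(K)` with `A(K) ≠ 0` forces
`b = 0` and `c = ±1`, hence `JA(K) = ±IA(K)`. -/
theorem stmt17 {V : Type*} [NormedAddCommGroup V] [InnerProductSpace ℝ V]
    [FiniteDimensional ℝ V] (hdim : Module.finrank ℝ V = 4)
    (I J A : V →ₗ[ℝ] V)
    (hI2 : ∀ x, I (I x) = -x) (hJ2 : ∀ x, J (J x) = -x)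
    (hIO : ∀ x y, ⟪I x, I y⟫ = ⟪x, y⟫) (hJO : ∀ x y, ⟪J x, J y⟫ = ⟪x, y⟫)
    (hIJ : ∀ x, I (J x) = J (I x))
    (hA : A ≠ 0)
    (hskew : ∀ x y, ⟪A x, y⟫ = -⟪x, A y⟫)
    (hAI : ∀ x, A (I x) = I (A x))
    (hAJ : ∀ x, A (J x) = -(J (A x)))
    (K : V) (hK : K ≠ 0)
    (hKJ : ⟪K, J K⟫ = 0) (hKI : ⟪K, I K⟫ = 0)
    (b c : ℝ)
    (heq : b • A K + c • J (A K) = I (A K))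
    (hAK : A K ≠ 0) :
    b = 0 ∧ (c = 1 ∨ c = -1) ∧ (J (A K) = I (A K) ∨ J (A K) = -(I (A K))) := by
  have hJorth : ∀ x : V, ⟪x, J x⟫ = 0 := by
    intro x
    have h := hJO x (J x)
    rw [hJ2, inner_neg_right] at h
    have h2 := real_inner_comm (J x) x
    linarith
  have hIorth : ∀ x : V, ⟪x, I x⟫ = 0 := by
    intro x
    have h := hIO x (I x)
    rw [hI2, inner_neg_right] at h
    have h2 := real_inner_comm (I x) x
    linarith
  have hAK2 : ⟪A K, A K⟫ ≠ 0 := fun h => hAK (inner_self_eq_zero.mp h)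
  have h1 : ⟪J (A K), A K⟫ = 0 := by rw [real_inner_comm]; exact hJorth _
  have h2 : ⟪I (A K), A K⟫ = 0 := by rw [real_inner_comm]; exact hIorth _
  have hb : b = 0 := by
    have h := congrArg (fun v => ⟪v, A K⟫) heq
    simp only [inner_add_left, real_inner_smul_left, h1, h2, mul_zero, add_zero] at h
    rcases mul_eq_zero.mp h with h | h
    · exact h
    · exact absurd h hAK2
  subst hb
  have heq' : c • J (A K) = I (A K) := by simpa using heq
  have hc : c = 1 ∨ c = -1 := by
    have h := congrArg (fun v => ⟪v, v⟫) heq'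
    simp only [real_inner_smul_left, real_inner_smul_right, hJO, hIO] at h
    apply mul_self_eq_one_iff.mp
    rcases mul_eq_zero.mp (by nlinarith : (c * c - 1) * ⟪A K, A K⟫ = 0) with h | h
    · linarith
    · exact absurd h hAK2
  refine ⟨rfl, hc, ?_⟩
  rcases hc with h | h
  · left; rw [h, one_smul] at heq'; exact heq'
  · right; rw [h] at heq'; rw [← heq']; simp
end
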